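/- arXiv:1505.06700 — 4 statements merged into one kernel-verified Lean document; each statement's English description precedes it below -/
import Mathlib

section
/- Let m : ℂ₊ → ℂ₊ be the Stieltjes transform of the semicircle law, i.e. the unique holomorphic function from the upper half-plane to itself satisfying m(z)² + z·m(z) + 1 = 0 and m(z) ~ 1/z as |z| → ∞. Then for all z, w in the upper half-plane, |m(z) − m(w)| ≤ 2·|z − w|^{1/2}. -/
/-!
Put `a = m z`, `b = m w`. Subtracting the two quadratic equations gives
`(a - b) (1 - a b) = (z - w) a b`. Taking imaginary parts in `a + z = -a⁻¹` shows that a root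
in the upper half-plane has `‖a‖ ≤ 1`, and for two points of the closed upper half of the unit
disc `‖1 - a b‖² - ‖a - b‖² = (1 - ‖a‖²)(1 - ‖b‖²) + 4 a.im b.im ≥ 0`.
Hence `‖a - b‖² ≤ ‖a - b‖ ‖1 - a b‖ = ‖z - w‖ ‖a b‖ ≤ ‖z - w‖`.
-/

open Complex

namespace SemicircleStieltjes

lemma norm_le_one_of_quadratic {a z : ℂ} (hz : 0 ≤ z.im) (ha : 0 < a.im)
    (h : a ^ 2 + z * a + 1 = 0) : ‖a‖ ≤ 1 := by
  have ha0 : a ≠ 0 := by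
    rintro rfl
    simp at ha
  have hsum : a + z = -a⁻¹ := by
    field_simp
    linear_combination h
  have him : a.im + z.im = a.im / normSq a := by
    simpa [inv_im, neg_div] using congrArg im hsum
  have hns : 0 < normSq a := normSq_pos.mpr ha0
  rw [eq_div_iff hns.ne'] at him
  have : normSq a ≤ 1 := by nlinarith
  rw [normSq_eq_norm_sq] at this
  exact (sq_le_one_iff₀ (norm_nonneg a)).mp this

lemma norm_sub_le_norm_one_sub_mul {a b : ℂ} (ha1 : ‖a‖ ≤ 1) (hb1 : ‖b‖ ≤ 1)
    (ha : 0 ≤ a.im) (hb : 0 ≤ b.im) : ‖a - b‖ ≤ ‖1 - a * b‖ := by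
  have ha1' : normSq a ≤ 1 := by
    rw [normSq_eq_norm_sq]; exact pow_le_one₀ (norm_nonneg a) ha1
  have hb1' : normSq b ≤ 1 := by
    rw [normSq_eq_norm_sq]; exact pow_le_one₀ (norm_nonneg b) hb1
  rw [norm_def, norm_def, Real.sqrt_le_sqrt_iff (normSq_nonneg _)]
  simp only [normSq_apply, sub_re, sub_im, mul_re, mul_im, one_re, one_im] at *
  nlinarith [mul_nonneg ha hb, mul_nonneg (sub_nonneg.mpr ha1') (sub_nonneg.mpr hb1')]

lemma norm_sub_sq_le {a b z w : ℂ} (hz : 0 ≤ z.im) (hw : 0 ≤ w.im) (ha : 0 < a.im)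
    (hb : 0 < b.im) (hqa : a ^ 2 + z * a + 1 = 0) (hqb : b ^ 2 + w * b + 1 = 0) :
    ‖a - b‖ ^ 2 ≤ ‖z - w‖ := by
  have ha1 := norm_le_one_of_quadratic hz ha hqa
  have hb1 := norm_le_one_of_quadratic hw hb hqb
  have key : (a - b) * (1 - a * b) = (z - w) * (a * b) := by
    linear_combination (-b) * hqa + a * hqb
  have hab : ‖a * b‖ ≤ 1 := by
    rw [norm_mul]; exact mul_le_one₀ ha1 (norm_nonneg b) hb1
  calc ‖a - b‖ ^ 2 ≤ ‖a - b‖ * ‖1 - a * b‖ := by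
        rw [sq]
        exact mul_le_mul_of_nonneg_left
          (norm_sub_le_norm_one_sub_mul ha1 hb1 ha.le hb.le) (norm_nonneg _)
    _ = ‖z - w‖ * ‖a * b‖ := by rw [← norm_mul, ← norm_mul, key]
    _ ≤ ‖z - w‖ := mul_le_of_le_one_right (norm_nonneg _) hab

end SemicircleStieltjes

open SemicircleStieltjes in
/-- Hölder-1/2 continuity of the Stieltjes transform of the semicircle law:
`m : ℂ₊ → ℂ₊` satisfies `m(z)² + z m(z) + 1 = 0`; then `|m z − m w| ≤ 2 |z − w|^{1/2}`. -/
theorem stmt_0 (m : ℂ → ℂ)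
    (hmap : ∀ z : ℂ, 0 < z.im → 0 < (m z).im)
    (heq : ∀ z : ℂ, 0 < z.im → (m z) ^ 2 + z * m z + 1 = 0) :
    ∀ z w : ℂ, 0 < z.im → 0 < w.im →
      ‖m z - m w‖ ≤ 2 * ‖z - w‖ ^ ((1 : ℝ) / 2) := by
  intro z w hz hw
  have hsq : ‖m z - m w‖ ^ 2 ≤ ‖z - w‖ :=
    norm_sub_sq_le hz.le hw.le (hmap z hz) (hmap w hw) (heq z hz) (heq w hw)
  have hsqrt : ‖m z - m w‖ ≤ ‖z - w‖ ^ ((1 : ℝ) / 2) := by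
    rw [← Real.sqrt_eq_rpow]
    exact Real.le_sqrt_of_sq_le hsq
  linarith [Real.rpow_nonneg (norm_nonneg (z - w)) ((1 : ℝ) / 2)]
end

section
/- The Stieltjes transform m of the semicircle law satisfies the semigroup identity m(z) = e^{t/2}·m(e^{t/2}(z + (1 − e^{−t})·m(z))) for every t ≥ 0 and every z in the upper half-plane. -/
/-!
With `c = e^{t/2}` we have `1 - e^{-t} = 1 - c⁻²`, and for `u = m(z)/c`, `w = c(z + (1 - c⁻²) m(z))`
a direct computation gives `u² + w u + 1 = m(z)² + z m(z) + 1 = 0`. For `c ≥ 1` both `u` and `w` lie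
in the upper half-plane. The two roots of `X² + wX + 1` have product `1`, so at most one of them
lies in the upper half-plane; hence `m(w) = u`.
-/

open Complex

theorem Complex.eq_of_sq_add_mul_add_one_eq_zero_of_im_pos {w a b : ℂ}
    (ha : a ^ 2 + w * a + 1 = 0) (hb : b ^ 2 + w * b + 1 = 0)
    (ha_im : 0 < a.im) (hb_im : 0 < b.im) : a = b := by
  have hfac : (a - b) * (a + b + w) = 0 := by linear_combination ha - hb
  rcases mul_eq_zero.mp hfac with h | h
  · exact sub_eq_zero.mp h
  · have hb_inv : b = a⁻¹ := eq_inv_of_mul_eq_one_right (by linear_combination a * h - ha)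
    have ha_ne : a ≠ 0 := fun h0 => by simp [h0] at ha_im
    have : b.im < 0 := by
      rw [hb_inv, inv_im]
      exact div_neg_of_neg_of_pos (neg_neg_of_pos ha_im) (normSq_pos.mpr ha_ne)
    linarith

theorem rescale_sq_add_mul_add_one {K : Type*} [Field K] {c : K} (hc : c ≠ 0) (z M : K) :
    (M / c) ^ 2 + c * (z + (1 - (c ^ 2)⁻¹) * M) * (M / c) + 1 = M ^ 2 + z * M + 1 := by
  field_simp
  ring

theorem im_ofReal_mul_add_ofReal_mul_pos {c s : ℝ} {z M : ℂ} (hc : 0 < c) (hs : 0 ≤ s)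
    (hz : 0 < z.im) (hM : 0 ≤ M.im) : 0 < ((c : ℂ) * (z + (s : ℂ) * M)).im := by
  simp only [mul_im, ofReal_re, ofReal_im, add_im, add_re, zero_mul, add_zero]
  have : 0 ≤ s * M.im := mul_nonneg hs hM
  positivity

theorem semicircle_semigroup_of_one_le (m : ℂ → ℂ)
    (hmap : ∀ z : ℂ, 0 < z.im → 0 < (m z).im)
    (heq : ∀ z : ℂ, 0 < z.im → (m z) ^ 2 + z * m z + 1 = 0)
    {c : ℝ} (hc : 1 ≤ c) {z : ℂ} (hz : 0 < z.im) :
    m z = c * m (c * (z + (1 - ((c : ℂ) ^ 2)⁻¹) * m z)) := by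
  have hc_pos : 0 < c := by linarith
  have hc_ne : (c : ℂ) ≠ 0 := ofReal_ne_zero.mpr hc_pos.ne'
  have hs : 0 ≤ 1 - (c ^ 2)⁻¹ := sub_nonneg.mpr (inv_le_one_of_one_le₀ (one_le_pow₀ hc))
  have hw : 0 < ((c : ℂ) * (z + (1 - ((c : ℂ) ^ 2)⁻¹) * m z)).im := by
    simpa using im_ofReal_mul_add_ofReal_mul_pos hc_pos hs hz (hmap z hz).le
  have hu : 0 < (m z / c).im := by
    rw [div_ofReal_im]
    exact div_pos (hmap z hz) hc_pos
  have hmw : m (c * (z + (1 - ((c : ℂ) ^ 2)⁻¹) * m z)) = m z / c :=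
    eq_of_sq_add_mul_add_one_eq_zero_of_im_pos (heq _ hw)
      ((rescale_sq_add_mul_add_one hc_ne z (m z)).trans (heq z hz)) (hmap _ hw) hu
  rw [hmw, mul_div_cancel₀ _ hc_ne]

/-- Free-convolution semigroup identity for the Stieltjes transform `m` of the semicircle law:
`m(z) = e^{t/2} m(e^{t/2}(z + (1 − e^{−t}) m(z)))` for all `t ≥ 0` and `z` in the upper
half-plane. -/
theorem stmt_2 (m : ℂ → ℂ)
    (hmap : ∀ z : ℂ, 0 < z.im → 0 < (m z).im)
    (heq : ∀ z : ℂ, 0 < z.im → (m z) ^ 2 + z * m z + 1 = 0) :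
    ∀ t : ℝ, 0 ≤ t → ∀ z : ℂ, 0 < z.im →
      m z = Complex.exp ((t : ℂ) / 2) *
        m (Complex.exp ((t : ℂ) / 2) * (z + (1 - Complex.exp (-(t : ℂ))) * m z)) := by
  intro t ht z hz
  have hc : Complex.exp ((t : ℂ) / 2) = (Real.exp (t / 2) : ℂ) := by
    push_cast
    rfl
  have hc_sq_inv : Complex.exp (-(t : ℂ)) = (Complex.exp ((t : ℂ) / 2) ^ 2)⁻¹ := by
    rw [← Complex.exp_nat_mul, ← Complex.exp_neg]
    ring_nf
  rw [hc_sq_inv, hc]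
  exact semicircle_semigroup_of_one_le m hmap heq (Real.one_le_exp (by positivity)) hz
end

section
/- Let A be a uniformly random d-regular graph on N vertices and suppose the indices i,j,m,n are distinct, i.e. |{i,j,m,n}| = 4. Let I₁ be the indicator that the graph restricted to {i,j,m,n} is 1-regular (i.e. exactly two disjoint edges among these four vertices are present). Then E(A_{ij} A_{mn} (1 − I₁)) = O((d/N)³). -/
open Matrix

/-- The four vertices `i,j,m,n` are distinct and the restriction of the graph encoded by `A`
to `{i,j,m,n}` is `1`-regular. -/
def OneReg {N : ℕ} (A : Matrix (Fin N) (Fin N) ℝ) (i j m n : Fin N) : Prop :=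
  i ≠ j ∧ i ≠ m ∧ i ≠ n ∧ j ≠ m ∧ j ≠ n ∧ m ≠ n ∧
    A i j + A i m + A i n = 1 ∧ A j i + A j m + A j n = 1 ∧
    A m i + A m j + A m n = 1 ∧ A n i + A n j + A n m = 1

open Classical in
/-- Indicator of the event that the restriction of the graph to `{i,j,m,n}` is `1`-regular. -/
noncomputable def indOneReg {N : ℕ} (A : Matrix (Fin N) (Fin N) ℝ) (i j m n : Fin N) : ℝ :=
  if OneReg A i j m n then 1 else 0


section Aux
variable {N d : ℕ} {S : Finset (Matrix (Fin N) (Fin N) ℝ)}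

def RegSet (N d : ℕ) (S : Finset (Matrix (Fin N) (Fin N) ℝ)) : Prop :=
  ∀ A : Matrix (Fin N) (Fin N) ℝ,
    A ∈ S ↔ (A.IsSymm ∧ (∀ p q, A p q = 0 ∨ A p q = 1) ∧ (∀ p, A p p = 0) ∧
      ∀ p, ∑ q, A p q = d)

lemma perm_mem (hS : RegSet N d S) (σ : Equiv.Perm (Fin N))
    {A : Matrix (Fin N) (Fin N) ℝ} (hA : A ∈ S) : A.submatrix σ σ ∈ S := by
  rw [hS] at hA ⊢
  obtain ⟨h1, h2, h3, h4⟩ := hA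
  refine ⟨h1.submatrix σ, fun p q => h2 _ _, fun p => h3 _, fun p => ?_⟩
  rw [show (∑ q, A.submatrix σ σ p q) = ∑ q, A (σ p) (σ q) from rfl,
    Equiv.sum_comp σ (fun q => A (σ p) q)]
  exact h4 (σ p)

lemma sum_perm (hS : RegSet N d S) (σ : Equiv.Perm (Fin N))
    (f : Matrix (Fin N) (Fin N) ℝ → ℝ) :
    ∑ A ∈ S, f (A.submatrix σ σ) = ∑ A ∈ S, f A := by
  refine Finset.sum_nbij' (fun A => A.submatrix σ σ) (fun A => A.submatrix σ.symm σ.symm)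
    (fun A hA => perm_mem hS σ hA) (fun A hA => perm_mem hS σ.symm hA)
    ?_ ?_ ?_
  · intro A hA
    simp [Matrix.submatrix_submatrix, Function.comp]
  · intro A hA
    simp [Matrix.submatrix_submatrix, Function.comp]
  · intro A hA; rfl

end Aux

section Count
variable {N d : ℕ} {S : Finset (Matrix (Fin N) (Fin N) ℝ)}

lemma entry_nonneg (hS : RegSet N d S) {A} (hA : A ∈ S) (p q : Fin N) : 0 ≤ A p q := by
  rcases ((hS A).1 hA).2.1 p q with h | h <;> simp [h]

lemma entry_le_one (hS : RegSet N d S) {A} (hA : A ∈ S) (p q : Fin N) : A p q ≤ 1 := by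
  rcases ((hS A).1 hA).2.1 p q with h | h <;> simp [h]

lemma two_le {a b : Fin N} (hab : a ≠ b) : 2 ≤ N := by
  have h1 : ({a, b} : Finset (Fin N)).card = 2 := by
    rw [Finset.card_insert_of_notMem (by simp [hab]), Finset.card_singleton]
  have h2 := Finset.card_le_univ ({a, b} : Finset (Fin N))
  simpa [h1] using h2

lemma three_le {a b c : Fin N} (hab : a ≠ b) (hac : a ≠ c) (hbc : b ≠ c) : 3 ≤ N := by
  have h1 : ({a, b, c} : Finset (Fin N)).card = 3 := by
    rw [Finset.card_insert_of_notMem (by simp [hab, hac]),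
        Finset.card_insert_of_notMem (by simp [hbc]), Finset.card_singleton]
  have h2 := Finset.card_le_univ ({a, b, c} : Finset (Fin N))
  simpa [h1] using h2

lemma sum_one (hS : RegSet N d S) {a b : Fin N} (hab : a ≠ b) :
    ((N : ℝ) - 1) * ∑ A ∈ S, A a b = (d : ℝ) * S.card := by
  have key : ∀ q : Fin N, q ≠ a → ∑ A ∈ S, A a b = ∑ A ∈ S, A a q := by
    intro q hq
    have := sum_perm hS (Equiv.swap q b) (fun A => A a q)
    simpa [Equiv.swap_apply_of_ne_of_ne (Ne.symm hq) hab, Equiv.swap_apply_left] using this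
  have h1 : ∑ q ∈ Finset.univ.erase a, ∑ A ∈ S, A a q
      = ((Finset.univ.erase a).card : ℝ) * ∑ A ∈ S, A a b := by
    rw [Finset.sum_congr rfl (fun q hq => (key q (Finset.ne_of_mem_erase hq)).symm)]
    simp [mul_comm]
  have h2 : ∑ q ∈ Finset.univ.erase a, ∑ A ∈ S, A a q = (d : ℝ) * S.card := by
    rw [Finset.sum_comm]
    have : ∀ A ∈ S, ∑ q ∈ Finset.univ.erase a, A a q = (d : ℝ) := by
      intro A hA
      obtain ⟨-, -, h3, h4⟩ := (hS A).1 hA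
      rw [Finset.sum_erase_eq_sub (Finset.mem_univ a), h4 a, h3 a, sub_zero]
    rw [Finset.sum_congr rfl this]
    simp [mul_comm]
  have hc : ((Finset.univ.erase a).card : ℝ) = (N : ℝ) - 1 := by
    rw [Finset.card_erase_of_mem (Finset.mem_univ a), Finset.card_univ, Fintype.card_fin,
      Nat.cast_sub a.pos, Nat.cast_one]
  rw [← hc, ← h1]; exact h2

lemma sum_two (hS : RegSet N d S) {a b c : Fin N} (hab : a ≠ b) (hac : a ≠ c) (hbc : b ≠ c) :
    ((N : ℝ) - 2) * ∑ A ∈ S, A a b * A b c = ((d : ℝ) - 1) * ∑ A ∈ S, A a b := by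
  have key : ∀ q : Fin N, q ≠ a → q ≠ b → ∑ A ∈ S, A a b * A b c = ∑ A ∈ S, A a b * A b q := by
    intro q hqa hqb
    have := sum_perm hS (Equiv.swap q c) (fun A => A a b * A b q)
    simpa [Equiv.swap_apply_of_ne_of_ne (Ne.symm hqa) hac,
      Equiv.swap_apply_of_ne_of_ne (Ne.symm hqb) hbc, Equiv.swap_apply_left] using this
  have h1 : ∑ q ∈ (Finset.univ.erase a).erase b, ∑ A ∈ S, A a b * A b q
      = (((Finset.univ.erase a).erase b).card : ℝ) * ∑ A ∈ S, A a b * A b c := by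
    rw [Finset.sum_congr rfl (fun q hq => (key q
      (Finset.ne_of_mem_erase (Finset.mem_of_mem_erase hq)) (Finset.ne_of_mem_erase hq)).symm)]
    simp [mul_comm]
  have h2 : ∑ q ∈ (Finset.univ.erase a).erase b, ∑ A ∈ S, A a b * A b q
      = ((d : ℝ) - 1) * ∑ A ∈ S, A a b := by
    rw [Finset.sum_comm, Finset.mul_sum]
    refine Finset.sum_congr rfl fun A hA => ?_
    obtain ⟨hsym, h01, h3, h4⟩ := (hS A).1 hA
    rw [← Finset.mul_sum]
    have hs : ∑ q ∈ (Finset.univ.erase a).erase b, A b q = (d : ℝ) - A b a := by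
      rw [Finset.erase_right_comm,
        Finset.sum_erase_eq_sub (Finset.mem_erase.2 ⟨hab, Finset.mem_univ a⟩),
        Finset.sum_erase_eq_sub (Finset.mem_univ b), h4 b, h3 b]
      ring
    have hba : A b a = A a b := by
      have := congrFun (congrFun hsym b) a
      simpa [Matrix.transpose_apply] using this.symm
    have hsq : A a b * A a b = A a b := by
      rcases h01 a b with h | h <;> simp [h]
    rw [hs, hba]
    linear_combination -hsq
  have hc : (((Finset.univ.erase a).erase b).card : ℝ) = (N : ℝ) - 2 := by
    rw [Finset.card_erase_of_mem (Finset.mem_erase.2 ⟨hab.symm, Finset.mem_univ b⟩),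
      Finset.card_erase_of_mem (Finset.mem_univ a), Finset.card_univ, Fintype.card_fin,
      Nat.sub_sub, Nat.cast_sub (two_le hab)]
    norm_num
  rw [← hc, ← h1]; exact h2

lemma sum_three (hS : RegSet N d S) {a b c e : Fin N}
    (hab : a ≠ b) (hac : a ≠ c) (hae : a ≠ e) (hbc : b ≠ c) (hbe : b ≠ e) (hce : c ≠ e) :
    ((N : ℝ) - 3) * ∑ A ∈ S, A a b * A b c * A c e ≤ (d : ℝ) * ∑ A ∈ S, A a b * A b c := by
  have key : ∀ q : Fin N, q ≠ a → q ≠ b → q ≠ c →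
      ∑ A ∈ S, A a b * A b c * A c e = ∑ A ∈ S, A a b * A b c * A c q := by
    intro q hqa hqb hqc
    have := sum_perm hS (Equiv.swap q e) (fun A => A a b * A b c * A c q)
    simpa [Equiv.swap_apply_of_ne_of_ne (Ne.symm hqa) hae,
      Equiv.swap_apply_of_ne_of_ne (Ne.symm hqb) hbe,
      Equiv.swap_apply_of_ne_of_ne (Ne.symm hqc) hce, Equiv.swap_apply_left] using this
  have h1 : ∑ q ∈ ((Finset.univ.erase a).erase b).erase c, ∑ A ∈ S, A a b * A b c * A c q
      = ((((Finset.univ.erase a).erase b).erase c).card : ℝ)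
          * ∑ A ∈ S, A a b * A b c * A c e := by
    rw [Finset.sum_congr rfl (fun q hq => (key q
      (Finset.ne_of_mem_erase (Finset.mem_of_mem_erase (Finset.mem_of_mem_erase hq)))
      (Finset.ne_of_mem_erase (Finset.mem_of_mem_erase hq))
      (Finset.ne_of_mem_erase hq)).symm)]
    simp [mul_comm]
  have h2 : ∑ q ∈ ((Finset.univ.erase a).erase b).erase c, ∑ A ∈ S, A a b * A b c * A c q
      ≤ (d : ℝ) * ∑ A ∈ S, A a b * A b c := by
    rw [Finset.sum_comm, Finset.mul_sum]
    refine Finset.sum_le_sum fun A hA => ?_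
    obtain ⟨hsym, h01, h3, h4⟩ := (hS A).1 hA
    rw [← Finset.mul_sum]
    have hs : ∑ q ∈ ((Finset.univ.erase a).erase b).erase c, A c q ≤ (d : ℝ) := by
      calc ∑ q ∈ ((Finset.univ.erase a).erase b).erase c, A c q
          ≤ ∑ q, A c q := Finset.sum_le_sum_of_subset_of_nonneg
            (fun x _ => Finset.mem_univ x) (fun q _ _ => entry_nonneg hS hA c q)
        _ = (d : ℝ) := h4 c
    have hnn : 0 ≤ A a b * A b c := mul_nonneg (entry_nonneg hS hA a b) (entry_nonneg hS hA b c)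
    calc A a b * A b c * ∑ q ∈ ((Finset.univ.erase a).erase b).erase c, A c q
        ≤ A a b * A b c * (d : ℝ) := mul_le_mul_of_nonneg_left hs hnn
      _ = (d : ℝ) * (A a b * A b c) := by ring
  have hc : ((((Finset.univ.erase a).erase b).erase c).card : ℝ) = (N : ℝ) - 3 := by
    rw [Finset.card_erase_of_mem (Finset.mem_erase.2 ⟨hbc.symm,
        Finset.mem_erase.2 ⟨hac.symm, Finset.mem_univ c⟩⟩),
      Finset.card_erase_of_mem (Finset.mem_erase.2 ⟨hab.symm, Finset.mem_univ b⟩),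
      Finset.card_erase_of_mem (Finset.mem_univ a), Finset.card_univ, Fintype.card_fin,
      Nat.sub_sub, Nat.sub_sub, Nat.cast_sub (three_le hab hac hbc)]
    norm_num
  calc ((N : ℝ) - 3) * ∑ A ∈ S, A a b * A b c * A c e
      = ∑ q ∈ ((Finset.univ.erase a).erase b).erase c, ∑ A ∈ S, A a b * A b c * A c q := by
        rw [h1, hc]
    _ ≤ _ := h2

end Count

lemma ind_nonneg {N : ℕ} (A : Matrix (Fin N) (Fin N) ℝ) (i j m n : Fin N) :
    0 ≤ indOneReg A i j m n := by
  unfold indOneReg; split <;> norm_num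

lemma ind_le_one {N : ℕ} (A : Matrix (Fin N) (Fin N) ℝ) (i j m n : Fin N) :
    indOneReg A i j m n ≤ 1 := by
  unfold indOneReg; split <;> norm_num

section Main
variable {N d : ℕ} {S : Finset (Matrix (Fin N) (Fin N) ℝ)}

lemma pointwise (hS : RegSet N d S) {A} (hA : A ∈ S) {i j m n : Fin N}
    (hij : i ≠ j) (him : i ≠ m) (hin : i ≠ n) (hjm : j ≠ m) (hjn : j ≠ n) (hmn : m ≠ n) :
    A i j * A m n * (1 - indOneReg A i j m n)
      ≤ A i j * A m n * (A i m + A i n + A j m + A j n) := by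
  obtain ⟨hsym, h01, h3, h4⟩ := (hS A).1 hA
  have symAp : ∀ p q : Fin N, A p q = A q p := fun p q => congrFun (congrFun hsym q) p
  have hcn : 0 ≤ A i m + A i n + A j m + A j n := by
    have := entry_nonneg hS hA i m; have := entry_nonneg hS hA i n
    have := entry_nonneg hS hA j m; have := entry_nonneg hS hA j n
    linarith
  rcases h01 i j with hij1 | hij1
  · rw [hij1]
    simpa using mul_nonneg (mul_nonneg le_rfl (entry_nonneg hS hA m n)) hcn
  rcases h01 m n with hmn1 | hmn1
  · rw [hmn1]
    simpa using mul_nonneg (mul_nonneg (entry_nonneg hS hA i j) le_rfl) hcn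
  by_cases hcross : A i m = 0 ∧ A i n = 0 ∧ A j m = 0 ∧ A j n = 0
  · obtain ⟨h1, h2, h3', h4'⟩ := hcross
    have e1 : A j i = 1 := by rw [← symAp i j, hij1]
    have e2 : A m i = 0 := by rw [← symAp i m, h1]
    have e3 : A m j = 0 := by rw [← symAp j m, h3']
    have e4 : A n i = 0 := by rw [← symAp i n, h2]
    have e5 : A n j = 0 := by rw [← symAp j n, h4']
    have e6 : A n m = 1 := by rw [← symAp m n, hmn1]
    have hor : OneReg A i j m n :=
      ⟨hij, him, hin, hjm, hjn, hmn, by rw [hij1, h1, h2]; ring,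
        by rw [e1, h3', h4']; ring, by rw [e2, e3, hmn1]; ring, by rw [e4, e5, e6]; ring⟩
    have hi1 : indOneReg A i j m n = 1 := by unfold indOneReg; rw [if_pos hor]
    rw [hi1, h1, h2, h3', h4']
    norm_num
  · have hsum : (1:ℝ) ≤ A i m + A i n + A j m + A j n := by
      rcases h01 i m with u1 | u1 <;> rcases h01 i n with u2 | u2 <;>
        rcases h01 j m with u3 | u3 <;> rcases h01 j n with u4 | u4 <;>
        (first
          | (exfalso; apply hcross; exact ⟨u1, u2, u3, u4⟩)
          | (rw [u1, u2, u3, u4]; norm_num))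
    simp only [hij1, hmn1, one_mul]
    have := ind_nonneg A i j m n
    linarith

lemma path_bound (hS : RegSet N d S) (h6 : (6:ℝ) ≤ (N:ℝ)) {a b c e : Fin N}
    (hab : a ≠ b) (hac : a ≠ c) (hae : a ≠ e) (hbc : b ≠ c) (hbe : b ≠ e) (hce : c ≠ e) :
    ∑ A ∈ S, A a b * A b c * A c e ≤ 8 * ((d : ℝ) / N) ^ 3 * S.card := by
  set E1 := ∑ A ∈ S, A a b with hE1def
  set E2 := ∑ A ∈ S, A a b * A b c with hE2def
  set E3 := ∑ A ∈ S, A a b * A b c * A c e with hE3def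
  have hE1nn : 0 ≤ E1 := Finset.sum_nonneg fun A hA => entry_nonneg hS hA a b
  have hE2nn : 0 ≤ E2 := Finset.sum_nonneg fun A hA =>
    mul_nonneg (entry_nonneg hS hA a b) (entry_nonneg hS hA b c)
  have hE3nn : 0 ≤ E3 := Finset.sum_nonneg fun A hA =>
    mul_nonneg (mul_nonneg (entry_nonneg hS hA a b) (entry_nonneg hS hA b c))
      (entry_nonneg hS hA c e)
  have hs1 := sum_one hS hab
  have hs2 := sum_two hS hab hac hbc
  have hs3 := sum_three hS hab hac hae hbc hbe hce
  rw [← hE1def] at hs1 hs2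
  rw [← hE2def] at hs2 hs3
  rw [← hE3def] at hs3
  have b1 : (N:ℝ) * E1 ≤ 2 * d * S.card := by
    have h := mul_nonneg (by linarith : (0:ℝ) ≤ (N:ℝ) - 2) hE1nn
    nlinarith [hs1]
  have b2 : (N:ℝ) * E2 ≤ 2 * d * E1 := by
    have h := mul_nonneg (by linarith : (0:ℝ) ≤ (N:ℝ) - 4) hE2nn
    nlinarith [hs2]
  have b3 : (N:ℝ) * E3 ≤ 2 * d * E2 := by
    have h := mul_nonneg (by linarith : (0:ℝ) ≤ (N:ℝ) - 6) hE3nn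
    nlinarith [hs3]
  have hNpos : (0:ℝ) < (N:ℝ) := by linarith
  have hdnn : (0:ℝ) ≤ (d:ℝ) := Nat.cast_nonneg d
  have c1 : (N:ℝ)^2 * ((N:ℝ) * E3) ≤ (N:ℝ)^2 * (2 * d * E2) :=
    mul_le_mul_of_nonneg_left b3 (by positivity)
  have c2 : (2*(d:ℝ)*(N:ℝ)) * ((N:ℝ) * E2) ≤ (2*(d:ℝ)*(N:ℝ)) * (2 * d * E1) :=
    mul_le_mul_of_nonneg_left b2 (by positivity)
  have c3 : (4*(d:ℝ)^2) * ((N:ℝ) * E1) ≤ (4*(d:ℝ)^2) * (2 * d * S.card) :=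
    mul_le_mul_of_nonneg_left b1 (by positivity)
  have key : E3 * (N:ℝ)^3 ≤ 8 * (d:ℝ)^3 * S.card := by nlinarith [c1, c2, c3]
  have hN3 : (0:ℝ) < (N:ℝ)^3 := by positivity
  rw [div_pow, show (8:ℝ) * ((d:ℝ)^3 / (N:ℝ)^3) * S.card
    = (8 * (d:ℝ)^3 * S.card) / (N:ℝ)^3 by ring, le_div_iff₀ hN3]
  exact key

end Main

/-- For a uniform random `d`-regular graph on `N` vertices and four distinct vertices
`i,j,m,n`, the probability-weighted contribution of non-switchable configurations satisfies
`E(A_{ij} A_{mn} (1 − I₁)) = O((d/N)³)` with an absolute implied constant. -/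
theorem stmt_8 :
    ∃ C : ℝ, 0 < C ∧
      ∀ (N d : ℕ) (S : Finset (Matrix (Fin N) (Fin N) ℝ)),
        (∀ A : Matrix (Fin N) (Fin N) ℝ,
          A ∈ S ↔ (A.IsSymm ∧ (∀ p q, A p q = 0 ∨ A p q = 1) ∧ (∀ p, A p p = 0) ∧
            ∀ p, ∑ q, A p q = d)) →
        S.Nonempty →
        ∀ i j m n : Fin N, i ≠ j → i ≠ m → i ≠ n → j ≠ m → j ≠ n → m ≠ n →
          (∑ A ∈ S, A i j * A m n * (1 - indOneReg A i j m n)) / (S.card : ℝ)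
            ≤ C * ((d : ℝ) / N) ^ 3 := by
  refine ⟨128, by norm_num, ?_⟩
  intro N d S hS hne i j m n hij him hin hjm hjn hmn
  have hSr : RegSet N d S := hS
  have hcard : 0 < (S.card : ℝ) := by exact_mod_cast Finset.card_pos.2 hne
  by_cases hd : d = 0
  · subst hd
    have hz : ∀ A ∈ S, A i j = 0 := by
      intro A hA
      have h4 := ((hSr A).1 hA).2.2.2
      have := (Finset.sum_eq_zero_iff_of_nonneg
        (fun q _ => entry_nonneg hSr hA i q)).1 (by simpa using h4 i)
      exact this j (Finset.mem_univ j)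
    have hzero : ∑ A ∈ S, A i j * A m n * (1 - indOneReg A i j m n) = 0 :=
      Finset.sum_eq_zero fun A hA => by rw [hz A hA]; ring
    rw [hzero]
    simp
  have hd1 : (1:ℝ) ≤ (d:ℝ) := by exact_mod_cast Nat.one_le_iff_ne_zero.2 hd
  have hNpos : 0 < N := i.pos
  have hNr : (0:ℝ) < (N:ℝ) := by exact_mod_cast hNpos
  by_cases hN : (N:ℝ) ≤ 5
  · -- small N: LHS ≤ 1 ≤ 128 (d/N)^3
    have hterm : ∀ A ∈ S, A i j * A m n * (1 - indOneReg A i j m n) ≤ 1 := by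
      intro A hA
      have h1 := entry_le_one hSr hA i j
      have h2 := entry_le_one hSr hA m n
      have h3 := entry_nonneg hSr hA i j
      have h4 := entry_nonneg hSr hA m n
      have h5 := ind_nonneg A i j m n
      have h6 := ind_le_one A i j m n
      have hxy : A i j * A m n ≤ 1 := mul_le_one₀ h1 h4 h2
      have hxynn : 0 ≤ A i j * A m n := mul_nonneg h3 h4
      nlinarith [mul_nonneg hxynn h5]
    have hsum : ∑ A ∈ S, A i j * A m n * (1 - indOneReg A i j m n) ≤ (S.card : ℝ) := by
      calc ∑ A ∈ S, A i j * A m n * (1 - indOneReg A i j m n)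
          ≤ ∑ _A ∈ S, (1:ℝ) := Finset.sum_le_sum hterm
        _ = (S.card : ℝ) := by simp
    have hLHS : (∑ A ∈ S, A i j * A m n * (1 - indOneReg A i j m n)) / (S.card : ℝ) ≤ 1 := by
      rw [div_le_one hcard]; exact hsum
    refine le_trans hLHS ?_
    have hq : (1:ℝ)/5 ≤ (d:ℝ)/(N:ℝ) := by
      rw [div_le_div_iff₀ (by norm_num) hNr]
      nlinarith
    calc (1:ℝ) ≤ 128 * ((1:ℝ)/5)^3 := by norm_num
      _ ≤ 128 * ((d:ℝ)/N)^3 := by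
          have : ((1:ℝ)/5)^3 ≤ ((d:ℝ)/N)^3 := by
            apply pow_le_pow_left₀ (by norm_num) hq
          linarith
  · push_neg at hN
    have h6 : (6:ℝ) ≤ (N:ℝ) := by
      have : (5:ℕ) < N := by exact_mod_cast hN
      exact_mod_cast this
    -- pointwise bound and split
    have hsplit : ∑ A ∈ S, A i j * A m n * (1 - indOneReg A i j m n)
        ≤ (∑ A ∈ S, A j i * A i m * A m n) + (∑ A ∈ S, A j i * A i n * A n m)
          + (∑ A ∈ S, A i j * A j m * A m n) + (∑ A ∈ S, A i j * A j n * A n m) := by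
      rw [← Finset.sum_add_distrib, ← Finset.sum_add_distrib, ← Finset.sum_add_distrib]
      refine Finset.sum_le_sum fun A hA => ?_
      have hsym := ((hSr A).1 hA).1
      have symAp : ∀ p q : Fin N, A p q = A q p := fun p q => congrFun (congrFun hsym q) p
      have hpt := pointwise hSr hA hij him hin hjm hjn hmn
      calc A i j * A m n * (1 - indOneReg A i j m n)
          ≤ A i j * A m n * (A i m + A i n + A j m + A j n) := hpt
        _ = A j i * A i m * A m n + A j i * A i n * A n m
            + A i j * A j m * A m n + A i j * A j n * A n m := by
            rw [← symAp i j, ← symAp m n]; ring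
    have p1 := path_bound hSr h6 hij.symm hjm hjn him hin hmn
    have p2 := path_bound hSr h6 hij.symm hjn hjm hin him hmn.symm
    have p3 := path_bound hSr h6 hij him hin hjm hjn hmn
    have p4 := path_bound hSr h6 hij hin him hjn hjm hmn.symm
    have hpow : 0 ≤ ((d:ℝ)/N)^3 * (S.card : ℝ) := by positivity
    rw [div_le_iff₀ hcard]
    calc ∑ A ∈ S, A i j * A m n * (1 - indOneReg A i j m n)
        ≤ _ := hsplit
      _ ≤ 8 * ((d:ℝ)/N)^3 * S.card + 8 * ((d:ℝ)/N)^3 * S.card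
          + 8 * ((d:ℝ)/N)^3 * S.card + 8 * ((d:ℝ)/N)^3 * S.card := by
          gcongr
      _ ≤ 128 * ((d:ℝ)/N)^3 * (S.card : ℝ) := by nlinarith [hpow]
end

section
/- Let M ≥ 1, let λ₁ ≥ ⋯ ≥ λ_M be real numbers, and let v₁, …, v_M be the rows of an orthogonal family of unit vectors in ℝ^N. Define G_{ij}(z) = ∑_{k=1}^{M} v_k(i) v_k(j) / (λ_k − z) for z = E + iη with η > 0, and s(z) = (1/M)∑_{k=1}^M 1/(λ_k − z). Then for all i, j: |G_{ij}(E + iη)| ≤ 4 N · (max_{k,l} |v_k(l)|²) · (1 + ∑_{n=0}^{⌈log₂ η^{−1}⌉} Im s(E + i·2ⁿ η)), provided η ≤ 1. -/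
/-!
For `z = E + iη`, each weight satisfies `|v_k(i) v_k(j)| ≤ B`, so it suffices to bound
`1/|λ_k - z|`. If `|λ_k - E| > 1` this is at most `1`. Otherwise take the smallest dyadic
scale `t = 2ⁿη ≥ |λ_k - E|`; then `t ≤ 2 max(|λ_k - E|, η) ≤ 2|λ_k - z|`, and
`Im (λ_k - E - it)⁻¹ = t/((λ_k - E)² + t²) ≥ 1/(2t) ≥ 1/(4|λ_k - z|)`. Summing over `k`
gives `M B (1 + 4 Σₙ Im s(E + i2ⁿη))`, which is at most `4 N B (1 + Σₙ Im s(E + i2ⁿη))`.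
-/

open Complex

lemma inv_le_four_mul_div_of_abs_le {r t x : ℝ} (ht : 0 < t) (hxt : |x| ≤ t) (htr : t ≤ 2 * r) :
    r⁻¹ ≤ 4 * (t / (x ^ 2 + t ^ 2)) := by
  have hx2 : x ^ 2 ≤ t ^ 2 := by simpa only [sq_abs] using pow_le_pow_left₀ (abs_nonneg x) hxt 2
  calc r⁻¹ ≤ (t / 2)⁻¹ := inv_anti₀ (by positivity) (by linarith)
    _ = 4 * (t / (2 * t ^ 2)) := by field_simp; ring
    _ ≤ 4 * (t / (x ^ 2 + t ^ 2)) := by gcongr; linarith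

lemma one_le_two_pow_ceil_logb_inv_mul {η : ℝ} (hη : 0 < η) :
    1 ≤ 2 ^ ⌈Real.logb 2 η⁻¹⌉₊ * η := by
  rw [← div_le_iff₀ hη, one_div]
  calc η⁻¹ = (2 : ℝ) ^ Real.logb 2 η⁻¹ := (Real.rpow_logb two_pos (by norm_num) (by positivity)).symm
    _ ≤ (2 : ℝ) ^ (⌈Real.logb 2 η⁻¹⌉₊ : ℝ) :=
        Real.rpow_le_rpow_of_exponent_le one_le_two (Nat.le_ceil _)
    _ = 2 ^ ⌈Real.logb 2 η⁻¹⌉₊ := Real.rpow_natCast 2 _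

lemma exists_dyadic_scale {x η : ℝ} {m : ℕ} (hη : 0 < η) (hx : |x| ≤ 2 ^ m * η) :
    ∃ n ≤ m, |x| ≤ 2 ^ n * η ∧ 2 ^ n * η ≤ 2 * max |x| η := by
  classical
  have hex : ∃ n : ℕ, |x| ≤ 2 ^ n * η := ⟨m, hx⟩
  refine ⟨Nat.find hex, Nat.find_min' hex hx, Nat.find_spec hex, ?_⟩
  cases hfind : Nat.find hex with
  | zero => linarith [le_max_right |x| η, pow_zero (2 : ℝ)]
  | succ n =>
    have hlt : ¬ |x| ≤ 2 ^ n * η := Nat.find_min hex (by omega)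
    rw [pow_succ]
    linarith [le_max_left |x| η]

lemma max_abs_le_sqrt_sq_add_sq (x η : ℝ) : max |x| η ≤ √(x ^ 2 + η ^ 2) :=
  max_le (Real.abs_le_sqrt (by nlinarith)) (Real.le_sqrt_of_sq_le (by nlinarith))

lemma inv_sqrt_le_one_add_four_mul_sum_dyadic {x η : ℝ} {m : ℕ} (hη : 0 < η)
    (hm : 1 ≤ 2 ^ m * η) :
    (√(x ^ 2 + η ^ 2))⁻¹ ≤
      1 + 4 * ∑ n ∈ Finset.range (m + 1), 2 ^ n * η / (x ^ 2 + (2 ^ n * η) ^ 2) := by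
  have hterm : ∀ n ∈ Finset.range (m + 1), 0 ≤ 2 ^ n * η / (x ^ 2 + (2 ^ n * η) ^ 2) :=
    fun n _ => by positivity
  have hsum := Finset.sum_nonneg hterm
  rcases le_or_gt |x| 1 with hx | hx
  · obtain ⟨n, hnm, hxn, hn2⟩ := exists_dyadic_scale hη (hx.trans hm)
    have hscale := inv_le_four_mul_div_of_abs_le (r := √(x ^ 2 + η ^ 2)) (by positivity) hxn
      (hn2.trans (by gcongr; exact max_abs_le_sqrt_sq_add_sq x η))
    have hsingle := Finset.single_le_sum hterm (Finset.mem_range_succ_iff.2 hnm)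
    linarith
  · have hsqrt : 1 ≤ √(x ^ 2 + η ^ 2) :=
      hx.le.trans ((le_max_left _ _).trans (max_abs_le_sqrt_sq_add_sq x η))
    linarith [inv_le_one_of_one_le₀ hsqrt]

lemma norm_ofReal_sub_add_mul_I (a E η : ℝ) :
    ‖(a : ℂ) - ((E : ℂ) + (η : ℂ) * I)‖ = √((a - E) ^ 2 + η ^ 2) := by
  rw [norm_def, normSq_apply]
  simp only [sub_re, add_re, mul_re, sub_im, add_im, mul_im, ofReal_re, ofReal_im, I_re, I_im]
  ring_nf

lemma im_inv_ofReal_sub_add_mul_I (a E t : ℝ) :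
    (((a : ℂ) - ((E : ℂ) + (t : ℂ) * I))⁻¹).im = t / ((a - E) ^ 2 + t ^ 2) := by
  rw [inv_im, normSq_apply]
  simp only [sub_re, add_re, mul_re, sub_im, add_im, mul_im, ofReal_re, ofReal_im, I_re, I_im]
  ring_nf

lemma abs_mul_le_of_sq_abs_le {a b B : ℝ} (ha : |a| ^ 2 ≤ B) (hb : |b| ^ 2 ≤ B) : |a * b| ≤ B := by
  rw [abs_mul]
  nlinarith [sq_nonneg (|a| - |b|)]

lemma im_natCast_inv_mul_sum_inv {ι : Type*} [Fintype ι] (M : ℕ) (lam : ι → ℝ) (E t : ℝ) :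
    ((M : ℂ)⁻¹ * ∑ k, ((lam k : ℂ) - ((E : ℂ) + (t : ℂ) * I))⁻¹).im =
      (M : ℝ)⁻¹ * ∑ k, t / ((lam k - E) ^ 2 + t ^ 2) := by
  rw [← ofReal_natCast, ← ofReal_inv, im_ofReal_mul, im_sum]
  simp only [im_inv_ofReal_sub_add_mul_I]

theorem stmt_10_general {M N : ℕ} (hM : 1 ≤ M) (hMN : M ≤ N)
    (lam : Fin M → ℝ) (v : Fin M → Fin N → ℝ)
    (E η : ℝ) (hη : 0 < η) (B : ℝ)
    (hB : ∀ (k : Fin M) (i : Fin N), |v k i| ^ 2 ≤ B) (i j : Fin N) :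
    ‖∑ k, ((v k i * v k j : ℝ) : ℂ) /
        (((lam k : ℝ) : ℂ) - ((E : ℂ) + (η : ℂ) * Complex.I))‖
      ≤ 4 * N * B * (1 + ∑ n ∈ Finset.range (⌈Real.logb 2 η⁻¹⌉₊ + 1),
          (((M : ℂ))⁻¹ * ∑ k, (((lam k : ℝ) : ℂ) -
            ((E : ℂ) + ((2 ^ n * η : ℝ) : ℂ) * Complex.I))⁻¹).im) := by
  set R := Finset.range (⌈Real.logb 2 η⁻¹⌉₊ + 1)
  set T := ∑ k, ∑ n ∈ R, 2 ^ n * η / ((lam k - E) ^ 2 + (2 ^ n * η) ^ 2)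
  have hB0 : 0 ≤ B := (sq_nonneg _).trans (hB ⟨0, hM⟩ i)
  have hT0 : 0 ≤ T := by positivity
  have hM0 : (0 : ℝ) < M := by exact_mod_cast hM
  simp only [im_natCast_inv_mul_sum_inv, ← Finset.mul_sum]
  rw [Finset.sum_comm]
  calc _ ≤ ∑ k, ‖((v k i * v k j : ℝ) : ℂ) / ((lam k : ℂ) - ((E : ℂ) + (η : ℂ) * I))‖ :=
        norm_sum_le _ _
    _ ≤ ∑ k, B * (√((lam k - E) ^ 2 + η ^ 2))⁻¹ := by
        gcongr with k
        rw [norm_div, norm_real, Real.norm_eq_abs, norm_ofReal_sub_add_mul_I, div_eq_mul_inv]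
        gcongr
        exact abs_mul_le_of_sq_abs_le (hB k i) (hB k j)
    _ ≤ ∑ k, B * (1 + 4 * ∑ n ∈ R, 2 ^ n * η / ((lam k - E) ^ 2 + (2 ^ n * η) ^ 2)) := by
        gcongr
        exact inv_sqrt_le_one_add_four_mul_sum_dyadic hη (one_le_two_pow_ceil_logb_inv_mul hη)
    _ = B * (M + 4 * T) := by
        rw [← Finset.mul_sum, Finset.sum_add_distrib, ← Finset.mul_sum]
        simp [T]
    _ ≤ 4 * M * B * (1 + (M : ℝ)⁻¹ * T) := by
        rw [show 4 * M * B * (1 + (M : ℝ)⁻¹ * T) = 4 * B * (M + T) by field_simp]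
        nlinarith
    _ ≤ 4 * N * B * (1 + (M : ℝ)⁻¹ * T) := by gcongr

/-- Dyadic decomposition bound for Green's function entries: with
`G_{ij}(z) = ∑_k v_k(i) v_k(j)/(λ_k − z)` and `s(z) = (1/M) ∑_k 1/(λ_k − z)`, for
`z = E + iη`, `0 < η ≤ 1`, and `B` a bound on `max_{k,l} |v_k(l)|²`,
`|G_{ij}| ≤ 4 N B (1 + ∑_{n=0}^{⌈log₂ η⁻¹⌉} Im s(E + i 2ⁿ η))`. -/
theorem stmt_10 {M N : ℕ} (hM : 1 ≤ M) (hMN : M ≤ N)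
    (lam : Fin M → ℝ) (v : Fin M → Fin N → ℝ)
    (horth : ∀ k l : Fin M, ∑ i, v k i * v l i = if k = l then (1 : ℝ) else 0)
    (E η : ℝ) (hη : 0 < η) (hη1 : η ≤ 1) (B : ℝ)
    (hB : ∀ (k : Fin M) (i : Fin N), |v k i| ^ 2 ≤ B) (i j : Fin N) :
    ‖∑ k, ((v k i * v k j : ℝ) : ℂ) /
        (((lam k : ℝ) : ℂ) - ((E : ℂ) + (η : ℂ) * Complex.I))‖
      ≤ 4 * N * B * (1 + ∑ n ∈ Finset.range (⌈Real.logb 2 η⁻¹⌉₊ + 1),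
          (((M : ℂ))⁻¹ * ∑ k, (((lam k : ℝ) : ℂ) -
            ((E : ℂ) + ((2 ^ n * η : ℝ) : ℂ) * Complex.I))⁻¹).im) :=
  stmt_10_general hM hMN lam v E η hη B hB i j
end
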